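/- arXiv:2504.21305 — 2 statements merged into one kernel-verified Lean document; each statement's English description precedes it below -/
import Mathlib

section
/- There exists an absolute constant C > 0 with the following property: for every h > 0, every b = (b₁, b₂) ∈ ℝ² with b₁ > 0, and every function v : ℝ² → ℝ that is continuously differentiable on an open neighborhood of the closure of the square Q_h(b) = (b₁, b₁+h) × (b₂, b₂+h), one has ∫_{∂Q_h(b)} x₁ v² dH¹ ≤ C · ((b₁+h)/b₁) · ( h⁻¹ ∫_{Q_h(b)} x₁ v² dA + h ∫_{Q_h(b)} x₁ |∇v|² dA ), where ∂Q_h(b) is the boundary of the square equipped with the one-dimensional Hausdorff measure H¹, and dA is the two-dimensional Lebesgue measure. -/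
/-!
On the closed square the weight `x₁` lies between `b₁` and `b₁ + h`, so it suffices to prove the
unweighted trace inequality `∫_{∂Q} v² dH¹ ≤ 8 ∫_Q (h⁻¹ v² + h |∇v|²)` and to pay the ratio
`(b₁ + h) / b₁` once. Each side of `Q` is an isometric copy of an interval, on which `H¹` is
Lebesgue measure. On every segment of `Q` perpendicular to a side, the one-dimensional estimate
`g(e)² ≤ 2 ∫ (h⁻¹ g² + h g'²)` holds: integrate `(g²)' = 2 g g'` from a point where `g²` is at
most its mean, and bound `2 g g'` by Young's inequality. Fubini integrates these bounds over `Q`.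
-/

open MeasureTheory

/-- The open square `(b₁, b₁+h) × (b₂, b₂+h)`. -/
def sqEl (b : ℝ × ℝ) (h : ℝ) : Set (ℝ × ℝ) :=
  Set.Ioo b.1 (b.1 + h) ×ˢ Set.Ioo b.2 (b.2 + h)

/-- Squared Euclidean norm of the gradient of a scalar field on `ℝ²`. -/
noncomputable def gradSq (v : ℝ × ℝ → ℝ) (x : ℝ × ℝ) : ℝ :=
  (fderiv ℝ v x (1, 0)) ^ 2 + (fderiv ℝ v x (0, 1)) ^ 2

open Set

theorem setIntegral_union_le_add {α : Type*} [MeasurableSpace α] {μ : Measure α} {s t : Set α}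
    {f : α → ℝ} (hf : 0 ≤ᵐ[μ] f) (hs : IntegrableOn f s μ) (ht : IntegrableOn f t μ) :
    ∫ x in s ∪ t, f x ∂μ ≤ ∫ x in s, f x ∂μ + ∫ x in t, f x ∂μ := by
  rw [← integral_add_measure hs ht]
  exact integral_mono_measure (Measure.restrict_union_le s t)
    (ae_add_measure_iff.2 ⟨ae_restrict_of_ae hf, ae_restrict_of_ae hf⟩)
    (Integrable.add_measure hs ht)

section Fubini

variable {α β : Type*} [MeasurableSpace α] [MeasurableSpace β] {μ : Measure α} {ν : Measure β}
  [SFinite μ] [SFinite ν] {s : Set α} {t : Set β} {F : α × β → ℝ}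

theorem setIntegral_le_setIntegral_prod {φ : α → ℝ} (hs : MeasurableSet s)
    (hφ : IntegrableOn φ s μ) (hF : IntegrableOn F (s ×ˢ t) (μ.prod ν))
    (hle : ∀ x ∈ s, φ x ≤ ∫ y in t, F (x, y) ∂ν) :
    ∫ x in s, φ x ∂μ ≤ ∫ z in s ×ˢ t, F z ∂μ.prod ν := by
  rw [setIntegral_prod F hF]
  rw [IntegrableOn, ← Measure.prod_restrict] at hF
  exact setIntegral_mono_on hφ hF.integral_prod_left hs hle

theorem setIntegral_le_setIntegral_prod_swap {φ : β → ℝ} (ht : MeasurableSet t)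
    (hφ : IntegrableOn φ t ν) (hF : IntegrableOn F (s ×ˢ t) (μ.prod ν))
    (hle : ∀ y ∈ t, φ y ≤ ∫ x in s, F (x, y) ∂μ) :
    ∫ y in t, φ y ∂ν ≤ ∫ z in s ×ˢ t, F z ∂μ.prod ν := by
  rw [← setIntegral_prod_swap]
  rw [IntegrableOn, ← Measure.prod_restrict] at hF
  refine setIntegral_le_setIntegral_prod ht hφ ?_ hle
  rw [IntegrableOn, ← Measure.prod_restrict]
  exact hF.swap

end Fubini

namespace Isometry

variable {X : Type*} [EMetricSpace X] [MeasurableSpace X] [BorelSpace X] {f : ℝ → X}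

theorem restrict_image_hausdorffMeasure_one (hf : Isometry f) (s : Set ℝ) :
    (μH[1] : Measure X).restrict (f '' s) = (volume.restrict s).map f := by
  calc (μH[1] : Measure X).restrict (f '' s)
      = ((μH[1] : Measure X).restrict (range f)).restrict (f '' s) :=
        (Measure.restrict_restrict_of_subset (image_subset_range f s)).symm
    _ = ((μH[1] : Measure ℝ).restrict (f ⁻¹' (f '' s))).map f := by
        rw [← hf.map_hausdorffMeasure (.inl zero_le_one),
          hf.isClosedEmbedding.measurableEmbedding.restrict_map]
    _ = (volume.restrict s).map f := by rw [hf.injective.preimage_image, hausdorffMeasure_real]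

variable {E : Type*} [NormedAddCommGroup E]

theorem integrableOn_image_hausdorffMeasure_one_iff (hf : Isometry f) {s : Set ℝ} {g : X → E} :
    IntegrableOn g (f '' s) μH[1] ↔ IntegrableOn (g ∘ f) s := by
  rw [IntegrableOn, hf.restrict_image_hausdorffMeasure_one,
    hf.isClosedEmbedding.measurableEmbedding.integrable_map_iff, IntegrableOn]

theorem integrableOn_image_Icc_hausdorffMeasure_one (hf : Isometry f) {g : X → E} {a b : ℝ}
    (hg : ContinuousOn g (f '' Icc a b)) : IntegrableOn g (f '' Icc a b) μH[1] :=
  hf.integrableOn_image_hausdorffMeasure_one_iff.2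
    (hg.comp hf.continuous.continuousOn (mapsTo_image _ _)).integrableOn_Icc

theorem setIntegral_image_hausdorffMeasure_one [NormedSpace ℝ E] (hf : Isometry f) (s : Set ℝ)
    (g : X → E) : ∫ x in f '' s, g x ∂μH[1] = ∫ t in s, g (f t) := by
  rw [hf.restrict_image_hausdorffMeasure_one,
    hf.isClosedEmbedding.measurableEmbedding.integral_map]

theorem prodMk_left {α β : Type*} [PseudoEMetricSpace α] [PseudoEMetricSpace β] (b : β) :
    Isometry fun a : α => (a, b) := fun x y => by simp [Prod.edist_eq]

theorem prodMk_right {α β : Type*} [PseudoEMetricSpace α] [PseudoEMetricSpace β]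
    (a : α) : Isometry (Prod.mk a : β → α × β) := fun x y => by simp [Prod.edist_eq]

end Isometry

theorem abs_two_mul_mul_le_inv_mul_sq_add_mul_sq {h : ℝ} (hh : 0 < h) (a b : ℝ) :
    |2 * a * b| ≤ h⁻¹ * a ^ 2 + h * b ^ 2 := by
  rw [abs_mul, abs_mul, abs_two, ← sq_abs a, ← sq_abs b]
  have key : h⁻¹ * |a| ^ 2 + h * |b| ^ 2 - 2 * |a| * |b| = h⁻¹ * (|a| - h * |b|) ^ 2 := by
    field_simp
    ring
  linarith [mul_nonneg (inv_pos.2 hh).le (sq_nonneg (|a| - h * |b|))]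

theorem sq_le_two_mul_setIntegral_Ioo {g g' : ℝ → ℝ} {c h e : ℝ} (hh : 0 < h)
    (hg : ∀ t ∈ Icc c (c + h), HasDerivAt g (g' t) t) (hg' : ContinuousOn g' (Icc c (c + h)))
    (he : e ∈ Icc c (c + h)) :
    g e ^ 2 ≤ 2 * ∫ t in Ioo c (c + h), (h⁻¹ * g t ^ 2 + h * g' t ^ 2) := by
  set E := fun t => h⁻¹ * g t ^ 2 + h * g' t ^ 2
  have hgc : ContinuousOn g (Icc c (c + h)) := fun t ht => (hg t ht).continuousAt.continuousWithinAt
  have hE : IntegrableOn E (Icc c (c + h)) :=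
    ((continuousOn_const.mul (hgc.pow 2)).add (continuousOn_const.mul (hg'.pow 2))).integrableOn_Icc
  have hE0 : ∀ t, 0 ≤ E t := fun t => by positivity
  have hosc : ∀ y ∈ Icc c (c + h), g e ^ 2 ≤ g y ^ 2 + ∫ t in Ioo c (c + h), E t := by
    intro y hy
    have hsub : uIcc y e ⊆ Icc c (c + h) := uIcc_subset_Icc hy he
    have hftc : ∫ t in y..e, 2 * g t * g' t = g e ^ 2 - g y ^ 2 :=
      intervalIntegral.integral_eq_sub_of_hasDerivAt (f := fun t => g t ^ 2)
        (fun t ht => ((hg t (hsub ht)).fun_pow 2).congr_deriv (by ring))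
        (((continuousOn_const.mul hgc).mul hg').mono hsub).intervalIntegrable
    have hbound : ‖∫ t in y..e, 2 * g t * g' t‖ ≤ ∫ t in Ioo c (c + h), E t := by
      rw [intervalIntegral.norm_intervalIntegral_eq, ← integral_Icc_eq_integral_Ioo]
      refine (norm_integral_le_of_norm_le (hE.mono_set (uIoc_subset_uIcc.trans hsub))
        (ae_of_all _ fun t => abs_two_mul_mul_le_inv_mul_sq_add_mul_sq hh _ _)).trans ?_
      exact setIntegral_mono_set hE (ae_of_all _ fun t => hE0 t)
        (uIoc_subset_uIcc.trans hsub).eventuallyLE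
    rw [hftc, Real.norm_eq_abs] at hbound
    linarith [le_abs_self (g e ^ 2 - g y ^ 2)]
  have hvol : volume.real (Ioo c (c + h)) = h := by
    rw [Real.volume_real_Ioo_of_le (by linarith)]; ring
  obtain ⟨y, hy, hy_avg⟩ := exists_le_setAverage (μ := volume) (f := fun t => g t ^ 2)
    (by simp [hh]) (by simp) ((hgc.pow 2).integrableOn_Icc.mono_set Ioo_subset_Icc_self)
  have hmean : ⨍ t in Ioo c (c + h), g t ^ 2 ≤ ∫ t in Ioo c (c + h), E t := by
    rw [setAverage_eq, hvol, smul_eq_mul, ← integral_const_mul]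
    exact setIntegral_mono_on
      (((hgc.pow 2).integrableOn_Icc.mono_set Ioo_subset_Icc_self).const_mul _)
      (hE.mono_set Ioo_subset_Icc_self) measurableSet_Ioo
      fun t _ => le_add_of_nonneg_right (by positivity)
  linarith [hosc y (Ioo_subset_Icc_self hy)]

theorem closure_sqEl {b : ℝ × ℝ} {h : ℝ} (hh : 0 < h) :
    closure (sqEl b h) = Icc b.1 (b.1 + h) ×ˢ Icc b.2 (b.2 + h) := by
  rw [sqEl, closure_prod_eq, closure_Ioo (by linarith), closure_Ioo (by linarith)]

theorem frontier_sqEl {b : ℝ × ℝ} {h : ℝ} (hh : 0 < h) :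
    frontier (sqEl b h) =
      ((fun t => (t, b.2)) '' Icc b.1 (b.1 + h) ∪ (fun t => (t, b.2 + h)) '' Icc b.1 (b.1 + h)) ∪
        (Prod.mk b.1 '' Icc b.2 (b.2 + h) ∪ Prod.mk (b.1 + h) '' Icc b.2 (b.2 + h)) := by
  rw [sqEl, frontier_prod_eq, closure_Ioo (by linarith), closure_Ioo (by linarith),
    frontier_Ioo (by linarith), frontier_Ioo (by linarith), insert_eq, insert_eq, prod_union,
    union_prod, prod_singleton, prod_singleton, singleton_prod, singleton_prod]

theorem ContinuousOn.integrableOn_sqEl {b : ℝ × ℝ} {h : ℝ} {f : ℝ × ℝ → ℝ}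
    (hf : ContinuousOn f (closure (sqEl b h))) : IntegrableOn f (sqEl b h) :=
  (hf.integrableOn_compact
    ((Metric.isBounded_Ioo _ _).prod (Metric.isBounded_Ioo _ _)).isCompact_closure).mono_set
      subset_closure

theorem ContinuousOn.gradSq {v : ℝ × ℝ → ℝ} {s : Set (ℝ × ℝ)}
    (hv : ContinuousOn (fderiv ℝ v) s) : ContinuousOn (gradSq v) s :=
  ((hv.clm_apply continuousOn_const).pow 2).add ((hv.clm_apply continuousOn_const).pow 2)

theorem sq_fderiv_apply_le_gradSq {v : ℝ × ℝ → ℝ} {w : ℝ × ℝ} (hw : w = (1, 0) ∨ w = (0, 1))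
    (x : ℝ × ℝ) : fderiv ℝ v x w ^ 2 ≤ gradSq v x := by
  rcases hw with rfl | rfl
  · exact le_add_of_nonneg_right (sq_nonneg _)
  · exact le_add_of_nonneg_left (sq_nonneg _)

noncomputable def scaledH1Density (h : ℝ) (v : ℝ × ℝ → ℝ) (x : ℝ × ℝ) : ℝ :=
  h⁻¹ * v x ^ 2 + h * gradSq v x

theorem sq_le_two_mul_setIntegral_scaledH1Density_comp {v : ℝ × ℝ → ℝ} {γ : ℝ → ℝ × ℝ} {w : ℝ × ℝ}
    {c h e : ℝ} (hh : 0 < h) (hw : w = (1, 0) ∨ w = (0, 1)) (hγ : ∀ y, HasDerivAt γ w y)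
    (hdiff : ∀ y ∈ Icc c (c + h), DifferentiableAt ℝ v (γ y))
    (hcont : ContinuousOn (fderiv ℝ v) (γ '' Icc c (c + h))) (he : e ∈ Icc c (c + h)) :
    v (γ e) ^ 2 ≤ 2 * ∫ y in Ioo c (c + h), scaledH1Density h v (γ y) := by
  have hγc : ContinuousOn γ (Icc c (c + h)) := fun y _ => (hγ y).continuousAt.continuousWithinAt
  have hvγ : ContinuousOn (fun y => v (γ y)) (Icc c (c + h)) := fun y hy =>
    (hdiff y hy).continuousAt.comp_continuousWithinAt (hγc y hy)
  have hdγ : ContinuousOn (fun y => fderiv ℝ v (γ y)) (Icc c (c + h)) :=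
    hcont.comp hγc (mapsTo_image _ _)
  refine (sq_le_two_mul_setIntegral_Ioo hh
    (fun y hy => (hdiff y hy).hasFDerivAt.comp_hasDerivAt y (hγ y))
    (hdγ.clm_apply continuousOn_const) he).trans ?_
  gcongr 2 * ?_
  refine setIntegral_mono_on ?_ ?_ measurableSet_Ioo fun y _ =>
    add_le_add_right (mul_le_mul_of_nonneg_left (sq_fderiv_apply_le_gradSq hw _) hh.le) _
  · exact ((continuousOn_const.mul (hvγ.pow 2)).add (continuousOn_const.mul
      ((hdγ.clm_apply continuousOn_const).pow 2))).integrableOn_Icc.mono_set Ioo_subset_Icc_self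
  · exact ((continuousOn_const.mul (hvγ.pow 2)).add (continuousOn_const.mul
      (hcont.gradSq.comp hγc (mapsTo_image _ _)))).integrableOn_Icc.mono_set Ioo_subset_Icc_self

section Square

variable {b : ℝ × ℝ} {h : ℝ} {v : ℝ × ℝ → ℝ}

theorem continuousOn_scaledH1Density {s : Set (ℝ × ℝ)}
    (hdiff : ∀ x ∈ s, DifferentiableAt ℝ v x) (hcont : ContinuousOn (fderiv ℝ v) s) :
    ContinuousOn (scaledH1Density h v) s :=
  (continuousOn_const.mul
    ((continuousOn_of_forall_continuousAt fun x hx => (hdiff x hx).continuousAt).pow 2)).add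
    (continuousOn_const.mul hcont.gradSq)

theorem setIntegral_sq_horizontal_side_le (hh : 0 < h)
    (hdiff : ∀ x ∈ closure (sqEl b h), DifferentiableAt ℝ v x)
    (hcont : ContinuousOn (fderiv ℝ v) (closure (sqEl b h))) {d : ℝ} (hd : d ∈ Icc b.2 (b.2 + h)) :
    ∫ t in Icc b.1 (b.1 + h), v (t, d) ^ 2 ≤ 2 * ∫ x in sqEl b h, scaledH1Density h v x := by
  have hF := (continuousOn_scaledH1Density (h := h) hdiff hcont).integrableOn_sqEl.const_mul 2
  rw [closure_sqEl hh] at hdiff hcont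
  have hv : ContinuousOn (fun t => v (t, d)) (Icc b.1 (b.1 + h)) := fun t ht =>
    (hdiff _ ⟨ht, hd⟩).continuousAt.comp_continuousWithinAt (by fun_prop)
  rw [integral_Icc_eq_integral_Ioo, ← integral_const_mul]
  refine setIntegral_le_setIntegral_prod measurableSet_Ioo
    ((hv.pow 2).integrableOn_Icc.mono_set Ioo_subset_Icc_self) hF fun t ht => ?_
  rw [integral_const_mul]
  exact sq_le_two_mul_setIntegral_scaledH1Density_comp hh (.inr rfl)
    (fun y => (hasDerivAt_const y t).prodMk (hasDerivAt_id y))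
    (fun y hy => hdiff _ ⟨Ioo_subset_Icc_self ht, hy⟩)
    (hcont.mono (image_subset_iff.2 fun y hy => ⟨Ioo_subset_Icc_self ht, hy⟩)) hd

theorem setIntegral_sq_vertical_side_le (hh : 0 < h)
    (hdiff : ∀ x ∈ closure (sqEl b h), DifferentiableAt ℝ v x)
    (hcont : ContinuousOn (fderiv ℝ v) (closure (sqEl b h))) {d : ℝ} (hd : d ∈ Icc b.1 (b.1 + h)) :
    ∫ t in Icc b.2 (b.2 + h), v (d, t) ^ 2 ≤ 2 * ∫ x in sqEl b h, scaledH1Density h v x := by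
  have hF := (continuousOn_scaledH1Density (h := h) hdiff hcont).integrableOn_sqEl.const_mul 2
  rw [closure_sqEl hh] at hdiff hcont
  have hv : ContinuousOn (fun t => v (d, t)) (Icc b.2 (b.2 + h)) := fun t ht =>
    (hdiff _ ⟨hd, ht⟩).continuousAt.comp_continuousWithinAt (by fun_prop)
  rw [integral_Icc_eq_integral_Ioo, ← integral_const_mul]
  refine setIntegral_le_setIntegral_prod_swap measurableSet_Ioo
    ((hv.pow 2).integrableOn_Icc.mono_set Ioo_subset_Icc_self) hF fun t ht => ?_
  rw [integral_const_mul]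
  exact sq_le_two_mul_setIntegral_scaledH1Density_comp hh (.inl rfl)
    (fun y => (hasDerivAt_id y).prodMk (hasDerivAt_const y t))
    (fun y hy => hdiff _ ⟨hy, Ioo_subset_Icc_self ht⟩)
    (hcont.mono (image_subset_iff.2 fun y hy => ⟨hy, Ioo_subset_Icc_self ht⟩)) hd

theorem integrableOn_frontier_sqEl (hh : 0 < h) {g : ℝ × ℝ → ℝ}
    (hg : ContinuousOn g (closure (sqEl b h))) : IntegrableOn g (frontier (sqEl b h)) μH[1] := by
  have hsub := frontier_subset_closure (s := sqEl b h)
  rw [frontier_sqEl hh] at hsub ⊢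
  simp only [union_subset_iff] at hsub
  obtain ⟨⟨h₁, h₂⟩, h₃, h₄⟩ := hsub
  exact ((Isometry.prodMk_left _).integrableOn_image_Icc_hausdorffMeasure_one (hg.mono h₁)
    |>.union ((Isometry.prodMk_left _).integrableOn_image_Icc_hausdorffMeasure_one (hg.mono h₂)))
    |>.union ((Isometry.prodMk_right _).integrableOn_image_Icc_hausdorffMeasure_one (hg.mono h₃)
    |>.union ((Isometry.prodMk_right _).integrableOn_image_Icc_hausdorffMeasure_one (hg.mono h₄)))

theorem setIntegral_frontier_sqEl_sq_le (hh : 0 < h)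
    (hdiff : ∀ x ∈ closure (sqEl b h), DifferentiableAt ℝ v x)
    (hcont : ContinuousOn (fderiv ℝ v) (closure (sqEl b h))) :
    ∫ x in frontier (sqEl b h), v x ^ 2 ∂μH[1] ≤ 8 * ∫ x in sqEl b h, scaledH1Density h v x := by
  have hv : ContinuousOn (fun x => v x ^ 2) (closure (sqEl b h)) :=
    (continuousOn_of_forall_continuousAt fun x hx => (hdiff x hx).continuousAt).pow 2
  have hsub := frontier_subset_closure (s := sqEl b h)
  rw [frontier_sqEl hh] at hsub ⊢
  simp only [union_subset_iff] at hsub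
  obtain ⟨⟨h₁, h₂⟩, h₃, h₄⟩ := hsub
  have i₁ := (Isometry.prodMk_left _).integrableOn_image_Icc_hausdorffMeasure_one (hv.mono h₁)
  have i₂ := (Isometry.prodMk_left _).integrableOn_image_Icc_hausdorffMeasure_one (hv.mono h₂)
  have i₃ := (Isometry.prodMk_right _).integrableOn_image_Icc_hausdorffMeasure_one (hv.mono h₃)
  have i₄ := (Isometry.prodMk_right _).integrableOn_image_Icc_hausdorffMeasure_one (hv.mono h₄)
  have hv₀ : 0 ≤ᵐ[μH[1]] fun x : ℝ × ℝ => v x ^ 2 := ae_of_all _ fun x => sq_nonneg _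
  refine (setIntegral_union_le_add hv₀ (i₁.union i₂) (i₃.union i₄)).trans ?_
  refine (add_le_add (setIntegral_union_le_add hv₀ i₁ i₂)
    (setIntegral_union_le_add hv₀ i₃ i₄)).trans ?_
  rw [(Isometry.prodMk_left _).setIntegral_image_hausdorffMeasure_one,
    (Isometry.prodMk_left _).setIntegral_image_hausdorffMeasure_one,
    (Isometry.prodMk_right _).setIntegral_image_hausdorffMeasure_one,
    (Isometry.prodMk_right _).setIntegral_image_hausdorffMeasure_one]
  have hb₁ : b.1 ∈ Icc b.1 (b.1 + h) := left_mem_Icc.2 (by linarith)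
  have hb₁' : b.1 + h ∈ Icc b.1 (b.1 + h) := right_mem_Icc.2 (by linarith)
  have hb₂ : b.2 ∈ Icc b.2 (b.2 + h) := left_mem_Icc.2 (by linarith)
  have hb₂' : b.2 + h ∈ Icc b.2 (b.2 + h) := right_mem_Icc.2 (by linarith)
  linarith [setIntegral_sq_horizontal_side_le hh hdiff hcont hb₂,
    setIntegral_sq_horizontal_side_le hh hdiff hcont hb₂',
    setIntegral_sq_vertical_side_le hh hdiff hcont hb₁,
    setIntegral_sq_vertical_side_le hh hdiff hcont hb₁']

theorem setIntegral_fst_mul_scaledH1Density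
    (hdiff : ∀ x ∈ closure (sqEl b h), DifferentiableAt ℝ v x)
    (hcont : ContinuousOn (fderiv ℝ v) (closure (sqEl b h))) :
    ∫ x in sqEl b h, x.1 * scaledH1Density h v x
      = h⁻¹ * (∫ x in sqEl b h, x.1 * v x ^ 2) + h * ∫ x in sqEl b h, x.1 * gradSq v x := by
  have hv : ContinuousOn v (closure (sqEl b h)) :=
    continuousOn_of_forall_continuousAt fun x hx => (hdiff x hx).continuousAt
  have i₁ : IntegrableOn (fun x => x.1 * v x ^ 2) (sqEl b h) :=
    (continuousOn_fst.mul (hv.pow 2)).integrableOn_sqEl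
  have i₂ : IntegrableOn (fun x => x.1 * gradSq v x) (sqEl b h) :=
    (continuousOn_fst.mul hcont.gradSq).integrableOn_sqEl
  simp_rw [scaledH1Density, mul_add, mul_left_comm _ h⁻¹, mul_left_comm _ h]
  rw [integral_add (i₁.const_mul _) (i₂.const_mul _), integral_const_mul, integral_const_mul]

theorem setIntegral_frontier_sqEl_fst_mul_sq_le (hh : 0 < h) (hb : 0 < b.1)
    (hdiff : ∀ x ∈ closure (sqEl b h), DifferentiableAt ℝ v x)
    (hcont : ContinuousOn (fderiv ℝ v) (closure (sqEl b h))) :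
    ∫ x in frontier (sqEl b h), x.1 * v x ^ 2 ∂μH[1]
      ≤ 8 * ((b.1 + h) / b.1) * ∫ x in sqEl b h, x.1 * scaledH1Density h v x := by
  have hv : ContinuousOn v (closure (sqEl b h)) :=
    continuousOn_of_forall_continuousAt fun x hx => (hdiff x hx).continuousAt
  have hF := continuousOn_scaledH1Density (h := h) hdiff hcont
  have hfst : ∀ x ∈ closure (sqEl b h), b.1 ≤ x.1 ∧ x.1 ≤ b.1 + h := by
    rw [closure_sqEl hh]; exact fun x hx => hx.1
  calc ∫ x in frontier (sqEl b h), x.1 * v x ^ 2 ∂μH[1]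
      ≤ ∫ x in frontier (sqEl b h), (b.1 + h) * v x ^ 2 ∂μH[1] := by
        refine setIntegral_mono_on (integrableOn_frontier_sqEl hh (by fun_prop))
          (integrableOn_frontier_sqEl hh (by fun_prop)) isClosed_frontier.measurableSet
          fun x hx => ?_
        gcongr
        exact (hfst x (frontier_subset_closure hx)).2
    _ ≤ (b.1 + h) * (8 * ∫ x in sqEl b h, scaledH1Density h v x) := by
        rw [integral_const_mul]
        gcongr
        exact setIntegral_frontier_sqEl_sq_le hh hdiff hcont
    _ = 8 * ((b.1 + h) / b.1) * ∫ x in sqEl b h, b.1 * scaledH1Density h v x := by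
        rw [integral_const_mul]; field_simp
    _ ≤ 8 * ((b.1 + h) / b.1) * ∫ x in sqEl b h, x.1 * scaledH1Density h v x := by
        refine mul_le_mul_of_nonneg_left (setIntegral_mono_on
          (continuousOn_const.mul hF).integrableOn_sqEl (continuousOn_fst.mul hF).integrableOn_sqEl
          (measurableSet_Ioo.prod measurableSet_Ioo) fun x hx => ?_) (by positivity)
        refine mul_le_mul_of_nonneg_right (hfst x (subset_closure hx)).1 ?_
        rw [scaledH1Density, gradSq]
        positivity

end Square

/-- Weighted (axisymmetric) trace inequality on square elements: boundary integrals
weighted by the radial coordinate `x₁` are controlled by weighted interior `L²` norms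
of the function and its gradient, with explicit scaling in the element size `h`. -/
theorem weighted_trace_inequality :
    ∃ C : ℝ, 0 < C ∧ ∀ (h : ℝ), 0 < h → ∀ b : ℝ × ℝ, 0 < b.1 →
      ∀ v : ℝ × ℝ → ℝ,
        (∃ U : Set (ℝ × ℝ), IsOpen U ∧ closure (sqEl b h) ⊆ U ∧ ContDiffOn ℝ 1 v U) →
        (∫ x in frontier (sqEl b h), x.1 * (v x) ^ 2 ∂(μH[1]))
          ≤ C * ((b.1 + h) / b.1) *
            (h⁻¹ * (∫ x in sqEl b h, x.1 * (v x) ^ 2 ∂volume)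
              + h * (∫ x in sqEl b h, x.1 * gradSq v x ∂volume)) := by
  refine ⟨8, by norm_num, ?_⟩
  rintro h hh b hb v ⟨U, hU, hQU, hv⟩
  have hdiff : ∀ x ∈ closure (sqEl b h), DifferentiableAt ℝ v x := fun x hx =>
    (hv.differentiableOn one_ne_zero).differentiableAt (hU.mem_nhds (hQU hx))
  have hcont := (hv.continuousOn_fderiv_of_isOpen hU le_rfl).mono hQU
  rw [← setIntegral_fst_mul_scaledH1Density hdiff hcont]
  exact setIntegral_frontier_sqEl_fst_mul_sq_le hh hb hdiff hcont
end

section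
/- There exists an absolute constant c > 0 with the following property: for every h > 0, every b = (b₁, b₂) ∈ ℝ² with b₁ > 0, and every affine map v : ℝ² → ℝ² (both components polynomials of total degree at most 1), the boundary stabilization satisfies the lower bound h⁻¹ ∫_{∂Q_h(b)} 2π x₁ |v|² dH¹ ≥ c ρ⁻¹ ∫_{Q_h(b)} x₁ |∇v|² dA, where Q_h(b) = (b₁, b₁+h) × (b₂, b₂+h), ρ = (b₁+h)/b₁, ∂Q_h(b) carries the one-dimensional Hausdorff measure H¹, |∇v|² is the sum of the squared Euclidean norms of the gradients of the two components, and dA is the two-dimensional Lebesgue measure. -/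
open MeasureTheory Real

/-! Along an edge of length `h`, the square of an affine function with slope `m` integrates to at
least `m² h³ / 12`, the excess being `h` times the square of its value at the midpoint. The bottom
edge sees `∂₁v` and the left edge sees `∂₂v`, so the unweighted boundary integral of `|v|²`
dominates `h³ |∇v|² / 12`. The weight `x₁` is at least `b₁` on the boundary and at most `b₁ + h`
on the element, whose area is `h²`; since `ρ⁻¹ (b₁ + h) = b₁`, the constant `1/2` works as soon
as `π ≥ 3`. -/

open Set

section Isometry

variable {α β : Type*} [PseudoEMetricSpace α] [PseudoEMetricSpace β]

theorem isometry_prodMk_const (b : β) : Isometry fun a : α => (a, b) := fun _ _ => by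
  simp [Prod.edist_eq]

theorem isometry_const_prodMk (a : α) : Isometry (Prod.mk a : β → α × β) := fun _ _ => by
  simp [Prod.edist_eq]

end Isometry

section HausdorffOnCurves

variable {X : Type*} [MetricSpace X] [MeasurableSpace X] [BorelSpace X] {f : ℝ → X}

theorem Isometry.hausdorffMeasure_one_image (hf : Isometry f) (s : Set ℝ) :
    μH[1] (f '' s) = volume s := by
  rw [hf.hausdorffMeasure_image (Or.inl zero_le_one), hausdorffMeasure_real]

theorem Isometry.setIntegral_image_hausdorffMeasure_one_s12 {E : Type*} [NormedAddCommGroup E]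
    [NormedSpace ℝ E] (hf : Isometry f) (g : X → E) (s : Set ℝ) :
    ∫ x in f '' s, g x ∂μH[1] = ∫ u in s, g (f u) := by
  have hmp : MeasurePreserving f volume (μH[1].restrict (range f)) :=
    ⟨hf.continuous.measurable, by
      rw [← hausdorffMeasure_real, hf.map_hausdorffMeasure (Or.inl zero_le_one)]⟩
  rw [← hmp.setIntegral_image_emb hf.isClosedEmbedding.measurableEmbedding,
    Measure.restrict_restrict_of_subset (image_subset_range f s)]

end HausdorffOnCurves

theorem integral_sq_affine (c m a h : ℝ) :
    ∫ u in a..a + h, (c + m * u) ^ 2 = h * (c + m * (a + h / 2)) ^ 2 + m ^ 2 * h ^ 3 / 12 := by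
  have hderiv : ∀ u ∈ uIcc a (a + h),
      HasDerivAt (fun u => c ^ 2 * u + c * m * u ^ 2 + m ^ 2 * u ^ 3 / 3) ((c + m * u) ^ 2) u := by
    intro u _
    refine ((((hasDerivAt_id' u).const_mul (c ^ 2)).fun_add
      ((hasDerivAt_pow 2 u).const_mul (c * m))).fun_add
      (((hasDerivAt_pow 3 u).const_mul (m ^ 2)).div_const 3)).congr_deriv ?_
    push_cast
    ring
  rw [intervalIntegral.integral_eq_sub_of_hasDerivAt hderiv
    ((by fun_prop : Continuous fun u => (c + m * u) ^ 2).intervalIntegrable _ _)]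
  ring

theorem sq_mul_pow_three_div_twelve_le_integral_sq_affine (c m a : ℝ) {h : ℝ} (hh : 0 ≤ h) :
    m ^ 2 * h ^ 3 / 12 ≤ ∫ u in a..a + h, (c + m * u) ^ 2 := by
  rw [integral_sq_affine]
  nlinarith [mul_nonneg hh (sq_nonneg (c + m * (a + h / 2)))]

theorem gradSq_affine (a₀ a₁ a₂ : ℝ) (x : ℝ × ℝ) :
    gradSq (fun y : ℝ × ℝ => a₀ + a₁ * y.1 + a₂ * y.2) x = a₁ ^ 2 + a₂ ^ 2 := by
  have hfst : HasFDerivAt (fun y : ℝ × ℝ => y.1) (ContinuousLinearMap.fst ℝ ℝ ℝ) x :=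
    hasFDerivAt_fst
  have hsnd : HasFDerivAt (fun y : ℝ × ℝ => y.2) (ContinuousLinearMap.snd ℝ ℝ ℝ) x :=
    hasFDerivAt_snd
  have hd := ((hasFDerivAt_const a₀ x).fun_add (hfst.const_mul a₁)).fun_add (hsnd.const_mul a₂)
  rw [gradSq, hd.fderiv]
  simp

namespace sqEl

variable {b : ℝ × ℝ} {h : ℝ}

theorem volume_real (hh : 0 ≤ h) : volume.real (sqEl b h) = h ^ 2 := by
  rw [sqEl, measureReal_def, Measure.volume_eq_prod, Measure.prod_prod, ENNReal.toReal_mul,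
    ← measureReal_def, ← measureReal_def, volume_real_Ioo_of_le (by linarith),
    volume_real_Ioo_of_le (by linarith)]
  ring

theorem setIntegral_fst_le (hb : 0 ≤ b.1) (hh : 0 ≤ h) :
    ∫ x in sqEl b h, x.1 ≤ (b.1 + h) * h ^ 2 := by
  have hfin : volume (sqEl b h) < ⊤ := by
    rw [sqEl, Measure.volume_eq_prod, Measure.prod_prod, Real.volume_Ioo, Real.volume_Ioo]
    exact ENNReal.mul_lt_top ENNReal.ofReal_lt_top ENNReal.ofReal_lt_top
  have hbound : ∀ x ∈ sqEl b h, ‖x.1‖ ≤ b.1 + h := fun x hx => by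
    rw [Real.norm_of_nonneg (hb.trans hx.1.1.le)]
    exact hx.1.2.le
  simpa [volume_real hh] using
    (le_abs_self _).trans (norm_setIntegral_le_of_norm_le_const hfin hbound)

theorem frontier_subset : frontier (sqEl b h) ⊆ Icc b.1 (b.1 + h) ×ˢ Icc b.2 (b.2 + h) :=
  frontier_subset_closure.trans <| (isClosed_Icc.prod isClosed_Icc).closure_subset_iff.2 <|
    prod_mono Ioo_subset_Icc_self Ioo_subset_Icc_self

theorem frontier_eq (hh : 0 < h) :
    frontier (sqEl b h) =
      ((fun u => (u, b.2)) '' Icc b.1 (b.1 + h) ∪ (fun u => (u, b.2 + h)) '' Icc b.1 (b.1 + h)) ∪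
        (Prod.mk b.1 '' Icc b.2 (b.2 + h) ∪ Prod.mk (b.1 + h) '' Icc b.2 (b.2 + h)) := by
  have h₁ : b.1 < b.1 + h := by linarith
  have h₂ : b.2 < b.2 + h := by linarith
  rw [sqEl, frontier_prod_eq, closure_Ioo h₁.ne, closure_Ioo h₂.ne, frontier_Ioo h₁,
    frontier_Ioo h₂, prod_insert, prod_singleton, insert_prod, singleton_prod]

theorem hausdorffMeasure_frontier_lt_top (hh : 0 < h) : μH[1] (frontier (sqEl b h)) < ⊤ := by
  simp only [frontier_eq hh, measure_union_lt_top_iff,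
    (isometry_prodMk_const (α := ℝ) (_ : ℝ)).hausdorffMeasure_one_image,
    (isometry_const_prodMk (β := ℝ) (_ : ℝ)).hausdorffMeasure_one_image,
    Real.volume_Icc, ENNReal.ofReal_lt_top, and_self]

theorem integrableOn_frontier (hh : 0 < h) {g : ℝ × ℝ → ℝ} (hg : Continuous g) :
    IntegrableOn g (frontier (sqEl b h)) μH[1] := by
  obtain ⟨C, hC⟩ := ((isCompact_Icc.prod isCompact_Icc).of_isClosed_subset isClosed_frontier
    frontier_subset).exists_bound_of_continuousOn hg.continuousOn
  exact Measure.integrableOn_of_bounded (hausdorffMeasure_frontier_lt_top hh).ne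
    hg.aestronglyMeasurable ((ae_restrict_iff' isClosed_frontier.measurableSet).2 (ae_of_all _ hC))

theorem integral_edges_le_setIntegral_frontier (hh : 0 < h) {g : ℝ × ℝ → ℝ}
    (hg : Continuous g) (hg₀ : 0 ≤ g) :
    (∫ u in b.1..b.1 + h, g (u, b.2)) + ∫ u in b.2..b.2 + h, g (b.1, u) ≤
      ∫ x in frontier (sqEl b h), g x ∂μH[1] := by
  have hbottom := isometry_prodMk_const (α := ℝ) b.2
  have hleft := isometry_const_prodMk (β := ℝ) b.1
  set B := (fun u => (u, b.2)) '' Icc b.1 (b.1 + h)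
  set L := Prod.mk b.1 '' Ioc b.2 (b.2 + h)
  have hB : B ⊆ frontier (sqEl b h) := by
    rw [frontier_eq hh]
    exact subset_union_left.trans subset_union_left
  have hL : L ⊆ frontier (sqEl b h) := by
    rw [frontier_eq hh]
    exact (image_mono Ioc_subset_Icc_self).trans (subset_union_left.trans subset_union_right)
  have hBL : Disjoint B L := by
    rw [disjoint_left]
    rintro _ ⟨u, -, rfl⟩ ⟨w, hw, hwu⟩
    rw [Prod.ext_iff] at hwu
    linarith [hw.1, hwu.2]
  have hint := integrableOn_frontier (b := b) hh hg
  calc (∫ u in b.1..b.1 + h, g (u, b.2)) + ∫ u in b.2..b.2 + h, g (b.1, u)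
      = (∫ x in B, g x ∂μH[1]) + ∫ x in L, g x ∂μH[1] := by
        rw [hbottom.setIntegral_image_hausdorffMeasure_one_s12,
          hleft.setIntegral_image_hausdorffMeasure_one_s12,
          integral_Icc_eq_integral_Ioc, intervalIntegral.integral_of_le (by linarith),
          intervalIntegral.integral_of_le (by linarith)]
    _ = ∫ x in B ∪ L, g x ∂μH[1] :=
        (setIntegral_union hBL (hleft.isClosedEmbedding.measurableEmbedding.measurableSet_image.2
          measurableSet_Ioc) (hint.mono_set hB) (hint.mono_set hL)).symm
    _ ≤ ∫ x in frontier (sqEl b h), g x ∂μH[1] :=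
        setIntegral_mono_set hint (ae_of_all _ hg₀) (union_subset hB hL).eventuallyLE

theorem mul_le_setIntegral_frontier_fst_mul_sq_affine (hb : 0 ≤ b.1) (hh : 0 < h)
    (a₀ a₁ a₂ : ℝ) :
    b.1 * ((a₁ ^ 2 + a₂ ^ 2) * h ^ 3 / 12) ≤
      ∫ x in frontier (sqEl b h), x.1 * (a₀ + a₁ * x.1 + a₂ * x.2) ^ 2 ∂μH[1] := by
  set f : ℝ × ℝ → ℝ := fun x => (a₀ + a₁ * x.1 + a₂ * x.2) ^ 2
  have hf : Continuous f := by fun_prop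
  have hedges : (a₁ ^ 2 + a₂ ^ 2) * h ^ 3 / 12 ≤
      (∫ u in b.1..b.1 + h, f (u, b.2)) + ∫ u in b.2..b.2 + h, f (b.1, u) := by
    have hbottom := sq_mul_pow_three_div_twelve_le_integral_sq_affine (a₀ + a₂ * b.2) a₁ b.1 hh.le
    have hleft := sq_mul_pow_three_div_twelve_le_integral_sq_affine (a₀ + a₁ * b.1) a₂ b.2 hh.le
    simp only [f, add_right_comm _ (a₁ * _)] at hbottom hleft ⊢
    linarith
  calc b.1 * ((a₁ ^ 2 + a₂ ^ 2) * h ^ 3 / 12)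
      ≤ b.1 * ∫ x in frontier (sqEl b h), f x ∂μH[1] :=
        mul_le_mul_of_nonneg_left (hedges.trans <|
          integral_edges_le_setIntegral_frontier hh hf fun x => sq_nonneg _) hb
    _ = ∫ x in frontier (sqEl b h), b.1 * f x ∂μH[1] := (integral_const_mul _ _).symm
    _ ≤ ∫ x in frontier (sqEl b h), x.1 * f x ∂μH[1] :=
        setIntegral_mono_on (integrableOn_frontier hh (by fun_prop))
          (integrableOn_frontier hh (by fun_prop)) isClosed_frontier.measurableSet
          fun x hx => mul_le_mul_of_nonneg_right (frontier_subset hx).1.1 (sq_nonneg _)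

theorem mul_le_setIntegral_frontier_stabilization_affine (hb : 0 ≤ b.1) (hh : 0 < h)
    (a₀ a₁ a₂ c₀ c₁ c₂ : ℝ) :
    2 * π * b.1 * ((a₁ ^ 2 + a₂ ^ 2 + (c₁ ^ 2 + c₂ ^ 2)) * h ^ 3 / 12) ≤
      ∫ x in frontier (sqEl b h),
        2 * π * x.1 * ((a₀ + a₁ * x.1 + a₂ * x.2) ^ 2 + (c₀ + c₁ * x.1 + c₂ * x.2) ^ 2) ∂μH[1] :=
  calc 2 * π * b.1 * ((a₁ ^ 2 + a₂ ^ 2 + (c₁ ^ 2 + c₂ ^ 2)) * h ^ 3 / 12)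
      = 2 * π * (b.1 * ((a₁ ^ 2 + a₂ ^ 2) * h ^ 3 / 12) +
          b.1 * ((c₁ ^ 2 + c₂ ^ 2) * h ^ 3 / 12)) := by ring
    _ ≤ 2 * π * ((∫ x in frontier (sqEl b h), x.1 * (a₀ + a₁ * x.1 + a₂ * x.2) ^ 2 ∂μH[1]) +
          ∫ x in frontier (sqEl b h), x.1 * (c₀ + c₁ * x.1 + c₂ * x.2) ^ 2 ∂μH[1]) := by
        gcongr <;> exact mul_le_setIntegral_frontier_fst_mul_sq_affine hb hh _ _ _
    _ = _ := by
        rw [← integral_add (integrableOn_frontier hh (by fun_prop))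
          (integrableOn_frontier hh (by fun_prop)), ← integral_const_mul]
        congr 1
        funext x
        ring

theorem setIntegral_fst_mul_gradSq_affine_le (hb : 0 ≤ b.1) (hh : 0 ≤ h)
    (a₀ a₁ a₂ c₀ c₁ c₂ : ℝ) :
    ∫ x in sqEl b h, x.1 * (gradSq (fun y => a₀ + a₁ * y.1 + a₂ * y.2) x +
      gradSq (fun y => c₀ + c₁ * y.1 + c₂ * y.2) x) ≤
        (b.1 + h) * h ^ 2 * (a₁ ^ 2 + a₂ ^ 2 + (c₁ ^ 2 + c₂ ^ 2)) := by
  simp only [gradSq_affine, integral_mul_const]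
  exact mul_le_mul_of_nonneg_right (setIntegral_fst_le hb hh) (by positivity)

end sqEl

/-- Lower bound of the stabilization norm-equivalence, for affine vector fields on
square elements: the boundary stabilization dominates the weighted energy seminorm
up to the inverse weight ratio, with constant independent of `h` and `b`. -/
theorem stabilization_lower_bound :
    ∃ c : ℝ, 0 < c ∧ ∀ (h : ℝ), 0 < h → ∀ b : ℝ × ℝ, 0 < b.1 →
      ∀ v : ℝ × ℝ → ℝ × ℝ,
        (∃ a₀ a₁ a₂ c₀ c₁ c₂ : ℝ,
            v = fun x => (a₀ + a₁ * x.1 + a₂ * x.2, c₀ + c₁ * x.1 + c₂ * x.2)) →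
        h⁻¹ * (∫ x in frontier (sqEl b h),
            2 * π * x.1 * ((v x).1 ^ 2 + (v x).2 ^ 2) ∂(μH[1]))
          ≥ c * ((b.1 + h) / b.1)⁻¹ *
            (∫ x in sqEl b h,
              x.1 * (gradSq (fun y => (v y).1) x + gradSq (fun y => (v y).2) x) ∂volume) := by
  refine ⟨1 / 2, by norm_num, fun h hh b hb v hv => ?_⟩
  obtain ⟨a₀, a₁, a₂, c₀, c₁, c₂, rfl⟩ := hv
  set K := a₁ ^ 2 + a₂ ^ 2 + (c₁ ^ 2 + c₂ ^ 2)
  have hstab := sqEl.mul_le_setIntegral_frontier_stabilization_affine hb.le hh a₀ a₁ a₂ c₀ c₁ c₂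
  have henergy := sqEl.setIntegral_fst_mul_gradSq_affine_le hb.le hh.le a₀ a₁ a₂ c₀ c₁ c₂
  have hπ : b.1 * h ^ 2 * K / 2 ≤ h⁻¹ * (2 * π * b.1 * (K * h ^ 3 / 12)) := by
    have hscale : h⁻¹ * (2 * π * b.1 * (K * h ^ 3 / 12)) = π / 6 * (b.1 * h ^ 2 * K) := by
      field_simp
      ring
    rw [hscale]
    nlinarith [pi_gt_three, (by positivity : 0 ≤ b.1 * h ^ 2 * K)]
  rw [ge_iff_le, inv_div]
  calc 1 / 2 * (b.1 / (b.1 + h)) * _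
      ≤ 1 / 2 * (b.1 / (b.1 + h)) * ((b.1 + h) * h ^ 2 * K) := by gcongr
    _ = b.1 * h ^ 2 * K / 2 := by field_simp
    _ ≤ h⁻¹ * (2 * π * b.1 * (K * h ^ 3 / 12)) := hπ
    _ ≤ h⁻¹ * _ := by gcongr
end
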